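/- arXiv:1912.13070 — 5 statements merged into one kernel-verified Lean document; each statement's English description precedes it below -/
import Mathlib

section
/- The set of singular real numbers coincides with ℚ: a real number ξ is singular (for every c > 0 and all sufficiently large t there is an integer q with 0 < q ≤ t and dist(qξ, ℤ) ≤ c/t) if and only if ξ is rational. -/
/-!
Write `‖x‖` for `distZ x`. A rational `ξ = p/q` is singular since `q ξ` is an integer. For
irrational `ξ` call `q` a best denominator if `‖q ξ‖ < ‖k ξ‖` for all `0 < k < q`; these exist
beyond any bound. For `0 < k < q` the fractions `round (k ξ) / k` and `round (q ξ) / q` must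
differ, so `1 ≤ q ‖k ξ‖ + k ‖q ξ‖ < (k + q) ‖k ξ‖`. Hence at `t = q - 1/2` every admissible `k`
has `‖k ξ‖ > 1/(2t)`, and singularity fails for `c = 1/4`.
-/

/-- The distance from a real number to the nearest integer. -/
noncomputable def distZ (x : ℝ) : ℝ := |x - round x|

def IsSingular (ξ : ℝ) : Prop :=
  ∀ c : ℝ, 0 < c → ∃ t₀ : ℝ, ∀ t : ℝ, t₀ ≤ t →
    ∃ q : ℤ, 0 < q ∧ (q : ℝ) ≤ t ∧ distZ ((q : ℝ) * ξ) ≤ c / t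

lemma distZ_nonneg (x : ℝ) : 0 ≤ distZ x := abs_nonneg _

lemma distZ_intCast (n : ℤ) : distZ n = 0 := by simp [distZ]

lemma Irrational.distZ_natCast_mul_pos {ξ : ℝ} (hξ : Irrational ξ) {q : ℕ} (hq : q ≠ 0) :
    0 < distZ (q * ξ) :=
  abs_pos.2 (sub_ne_zero.2 ((hξ.natCast_mul hq).ne_int _))

lemma exists_distZ_natCast_mul_lt (ξ : ℝ) {ε : ℝ} (hε : 0 < ε) :
    ∃ q : ℕ, 0 < q ∧ distZ (q * ξ) < ε := by
  obtain ⟨n, hn⟩ := exists_nat_one_div_lt hε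
  obtain ⟨q, hq₀, -, hq⟩ := Real.exists_nat_abs_mul_sub_round_le ξ n.succ_pos
  refine ⟨q, hq₀, hq.trans_lt (lt_of_le_of_lt ?_ hn)⟩
  gcongr
  linarith

lemma eq_or_one_le_abs_sub_add_abs_sub (x : ℝ) (a b : ℤ) :
    |x - a| = |x - b| ∨ 1 ≤ |x - a| + |x - b| := by
  rcases eq_or_ne a b with rfl | hab
  · exact .inl rfl
  · right
    calc (1 : ℝ) ≤ |((a - b : ℤ) : ℝ)| := by exact_mod_cast Int.one_le_abs (sub_ne_zero.2 hab)
      _ ≤ |x - a| + |x - b| := by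
        push_cast
        rw [abs_sub_comm x]
        exact abs_sub_le _ _ _

lemma natCast_mul_distZ (ξ : ℝ) (m n : ℕ) :
    n * distZ (m * ξ) = |m * n * ξ - ((n * round (m * ξ) : ℤ) : ℝ)| := by
  conv_lhs => rw [distZ, ← Nat.abs_cast n, ← abs_mul]
  push_cast
  ring_nf

/-- Either `round (m ξ) / m = round (n ξ) / n`, or these fractions differ by at least `1 / (m n)`. -/
lemma mul_distZ_eq_or_one_le (ξ : ℝ) (m n : ℕ) :
    n * distZ (m * ξ) = m * distZ (n * ξ) ∨ 1 ≤ n * distZ (m * ξ) + m * distZ (n * ξ) := by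
  rw [natCast_mul_distZ, natCast_mul_distZ, mul_comm (n : ℝ)]
  exact eq_or_one_le_abs_sub_add_abs_sub _ _ _

def IsBestDenominator (ξ : ℝ) (q : ℕ) : Prop :=
  ∀ k : ℕ, 0 < k → k < q → distZ (q * ξ) < distZ (k * ξ)

lemma IsBestDenominator.one_div_add_lt_distZ {ξ : ℝ} {q : ℕ} (hq : IsBestDenominator ξ q)
    {k : ℕ} (hk₀ : 0 < k) (hkq : k < q) : 1 / (k + q) < distZ (k * ξ) := by
  have hlt := hq k hk₀ hkq
  have hq₀ := distZ_nonneg (q * ξ)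
  have hk₀' : (0 : ℝ) < k := by exact_mod_cast hk₀
  have hkq' : (k : ℝ) < q := by exact_mod_cast hkq
  rcases mul_distZ_eq_or_one_le ξ k q with heq | hone
  · nlinarith
  · rw [div_lt_iff₀ (by positivity)]
    nlinarith

lemma Irrational.exists_isBestDenominator_gt {ξ : ℝ} (hξ : Irrational ξ) (T : ℕ) :
    ∃ q, T < q ∧ IsBestDenominator ξ q := by
  obtain ⟨k₀, hk₀, hmin⟩ :=
    (Finset.Icc 1 (T + 1)).exists_min_image (fun k : ℕ => distZ (k * ξ)) ⟨1, by simp⟩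
  have hm : 0 < distZ (k₀ * ξ) :=
    hξ.distZ_natCast_mul_pos (Nat.one_le_iff_ne_zero.1 (Finset.mem_Icc.1 hk₀).1)
  have hex := exists_distZ_natCast_mul_lt ξ hm
  obtain ⟨hfind₀, hfind⟩ := Nat.find_spec hex
  refine ⟨Nat.find hex, ?_, fun k hk hkq => hfind.trans_le ?_⟩
  · by_contra! h
    linarith [hmin _ (Finset.mem_Icc.2 ⟨hfind₀, by omega⟩)]
  · exact not_lt.1 fun h => Nat.find_min hex hkq ⟨hk, h⟩

lemma Irrational.not_isSingular {ξ : ℝ} (hξ : Irrational ξ) : ¬ IsSingular ξ := by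
  intro h
  obtain ⟨t₀, ht₀⟩ := h (1 / 4) (by norm_num)
  obtain ⟨q, hTq, hq⟩ := hξ.exists_isBestDenominator_gt ⌈t₀⌉₊
  have hTq' : (⌈t₀⌉₊ : ℝ) + 1 ≤ q := by exact_mod_cast hTq
  obtain ⟨k, hk₀, hkt, hk⟩ := ht₀ (q - 1 / 2) (by linarith [Nat.le_ceil t₀])
  lift k to ℕ using hk₀.le
  push_cast at hk₀ hkt hk
  have hkq : k < q := by exact_mod_cast (by linarith : (k : ℝ) < q)
  have hkq' : (k : ℝ) + 1 ≤ q := by exact_mod_cast hkq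
  have hbound : 1 / 4 / ((q : ℝ) - 1 / 2) < 1 / (k + q) := by
    rw [div_div, div_lt_div_iff₀ (by linarith) (by linarith)]
    linarith
  linarith [hq.one_div_add_lt_distZ (by exact_mod_cast hk₀) hkq]

lemma isSingular_ratCast (r : ℚ) : IsSingular r := by
  intro c hc
  refine ⟨r.den, fun t ht => ⟨r.den, by exact_mod_cast r.pos, by exact_mod_cast ht, ?_⟩⟩
  have hnum : ((r.den : ℤ) : ℝ) * r = r.num := by exact_mod_cast r.den_mul_eq_num
  rw [hnum, distZ_intCast]
  exact div_nonneg hc.le (le_trans (by positivity) ht)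

/-- A real number is singular if and only if it is rational. -/
theorem singular_iff_rational (ξ : ℝ) :
    (∀ c : ℝ, 0 < c → ∃ t₀ : ℝ, ∀ t : ℝ, t₀ ≤ t →
      ∃ q : ℤ, 0 < q ∧ (q : ℝ) ≤ t ∧ distZ ((q : ℝ) * ξ) ≤ c / t) ↔
    ∃ r : ℚ, ξ = (r : ℝ) := by
  refine ⟨fun h => ?_, ?_⟩
  · by_contra hrat
    exact Irrational.not_isSingular (fun ⟨r, hr⟩ => hrat ⟨r, hr.symm⟩) h
  · rintro ⟨r, rfl⟩
    exact isSingular_ratCast r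
end

section
/- Let k ≥ 3 and let f : (0,1)^k → ℝⁿ be a real analytic immersion whose image M is not contained in any rational affine hyperplane of ℝⁿ. Then there exists α ∈ (0,1) such that the image of f_α : (0,1)^{k-1} → ℝⁿ, f_α(x₁,…,x_{k-1}) = f(x₁,…,x_{k-1},α), is not contained in any rational affine hyperplane. -/
/-- A rational affine hyperplane in `ℝⁿ`. -/
def IsRatAffineHyperplane (n : ℕ) (A : Set (Fin n → ℝ)) : Prop :=
  ∃ m : Fin n → ℤ, m ≠ 0 ∧ ∃ m₀ : ℤ, A = {ξ | ∑ i, (m i : ℝ) * ξ i = (m₀ : ℝ)}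

open Set

/-!
If every slice `f_α` lay in a rational hyperplane, the countably many closed sets
`{α | f_α lies in H}` would cover `(0,1)`, so by Baire one of them contains an open set `V`.
Then `f` maps the open set `(0,1)^k × V` into `H`, and by the identity principle for analytic
functions on the connected box it maps all of `(0,1)^(k+1)` into `H`.
-/

section Baire

variable {X Y Z : Type*} [TopologicalSpace X] [TopologicalSpace Y]

theorem isClosed_setOf_mapsTo {F : Z → X → Y} {C : Set Z} {A : Set Y}
    (hF : ∀ z ∈ C, Continuous (F z)) (hA : IsClosed A) :
    IsClosed {x | MapsTo (F · x) C A} := by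
  simp only [MapsTo, ofPred_forall]
  exact isClosed_biInter fun z hz => hA.preimage (hF z hz)

theorem BaireSpace.exists_nonempty_interior_setOf_mapsTo [BaireSpace X] [Nonempty X]
    {𝒜 : Set (Set Y)} (h𝒜 : 𝒜.Countable) (hclosed : ∀ A ∈ 𝒜, IsClosed A)
    {F : Z → X → Y} {C : Set Z} (hF : ∀ z ∈ C, Continuous (F z))
    (hcover : ∀ x, ∃ A ∈ 𝒜, MapsTo (F · x) C A) :
    ∃ A ∈ 𝒜, (interior {x | MapsTo (F · x) C A}).Nonempty := by
  have hunion : ⋃ A ∈ 𝒜, {x | MapsTo (F · x) C A} = univ :=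
    eq_univ_of_forall fun x => by simpa only [mem_iUnion, exists_prop, mem_ofPred_eq] using hcover x
  obtain ⟨x, hx⟩ := (dense_biUnion_interior_of_closed
    (fun A hA => isClosed_setOf_mapsTo hF (hclosed A hA)) h𝒜 hunion).nonempty
  obtain ⟨A, hA, hxA⟩ := mem_iUnion₂.1 hx
  exact ⟨A, hA, x, hxA⟩

theorem IsOpen.exists_isOpen_forall_mapsTo [BaireSpace X] {s : Set X} (hs : IsOpen s)
    (hne : s.Nonempty) {𝒜 : Set (Set Y)} (h𝒜 : 𝒜.Countable) (hclosed : ∀ A ∈ 𝒜, IsClosed A)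
    {F : Z → X → Y} {C : Set Z} (hF : ∀ z ∈ C, ContinuousOn (F z) s)
    (hcover : ∀ x ∈ s, ∃ A ∈ 𝒜, MapsTo (F · x) C A) :
    ∃ A ∈ 𝒜, ∃ V ⊆ s, IsOpen V ∧ V.Nonempty ∧ ∀ x ∈ V, MapsTo (F · x) C A := by
  have := hs.baireSpace
  have := hne.to_subtype
  obtain ⟨A, hA, x, hx⟩ := BaireSpace.exists_nonempty_interior_setOf_mapsTo h𝒜 hclosed
    (F := fun z (x : s) => F z x) (fun z hz => (hF z hz).domRestrict) fun x => hcover x x.2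
  refine ⟨A, hA, Subtype.val '' interior {x : s | MapsTo (F · x) C A}, ?_,
    hs.isOpenMap_subtype_val _ isOpen_interior, ⟨x, mem_image_of_mem _ hx⟩, ?_⟩
  · exact image_subset_iff.2 fun x _ => x.2
  · rintro _ ⟨y, hy, rfl⟩
    exact interior_subset hy

end Baire

theorem AnalyticOnNhd.eqOn_of_preconnected_of_eqOn_isOpen {𝕜 E F : Type*}
    [NontriviallyNormedField 𝕜] [NormedAddCommGroup E] [NormedSpace 𝕜 E]
    [NormedAddCommGroup F] [NormedSpace 𝕜 F]
    {f g : E → F} {U W : Set E} (hf : AnalyticOnNhd 𝕜 f U) (hg : AnalyticOnNhd 𝕜 g U)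
    (hU : IsPreconnected U) (hW : IsOpen W) (hWU : W ⊆ U) (hWne : W.Nonempty)
    (hfg : EqOn f g W) : EqOn f g U := by
  obtain ⟨z, hz⟩ := hWne
  exact hf.eqOn_of_preconnected_of_eventuallyEq hg hU (hWU hz)
    (Filter.eventuallyEq_of_mem (hW.mem_nhds hz) hfg)

namespace IsRatAffineHyperplane

variable {n : ℕ} {A : Set (Fin n → ℝ)}

theorem isClosed (hA : IsRatAffineHyperplane n A) : IsClosed A := by
  obtain ⟨m, -, m₀, rfl⟩ := hA
  exact isClosed_eq (by fun_prop) continuous_const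

theorem mapsTo_of_analyticOnNhd {E : Type*} [NormedAddCommGroup E] [NormedSpace ℝ E]
    (hA : IsRatAffineHyperplane n A) {f : E → Fin n → ℝ} {U W : Set E}
    (hf : AnalyticOnNhd ℝ f U) (hU : IsPreconnected U) (hW : IsOpen W) (hWU : W ⊆ U)
    (hWne : W.Nonempty) (hfW : MapsTo f W A) : MapsTo f U A := by
  obtain ⟨m, -, m₀, rfl⟩ := hA
  have hφ : AnalyticOnNhd ℝ (fun x => ∑ i, (m i : ℝ) * f x i) U :=
    Finset.analyticOnNhd_fun_sum _ fun i _ => analyticOnNhd_const.mul fun x hx =>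
      ((ContinuousLinearMap.proj i : (Fin n → ℝ) →L[ℝ] ℝ).analyticAt _).comp (hf x hx)
  exact hφ.eqOn_of_preconnected_of_eqOn_isOpen analyticOnNhd_const hU hW hWU hWne hfW

end IsRatAffineHyperplane

theorem countable_setOf_isRatAffineHyperplane (n : ℕ) :
    {A | IsRatAffineHyperplane n A}.Countable := by
  refine (countable_range fun q : (Fin n → ℤ) × ℤ =>
    {ξ : Fin n → ℝ | ∑ i, (q.1 i : ℝ) * ξ i = (q.2 : ℝ)}).mono ?_
  rintro _ ⟨m, -, m₀, rfl⟩
  exact ⟨(m, m₀), rfl⟩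

section Box

variable {ι α : Type*}

theorem setOf_forall_mem_eq_univ_pi (s : Set α) :
    {x : ι → α | ∀ i, x i ∈ s} = univ.pi fun _ => s := by
  ext; simp

variable [TopologicalSpace α]

theorem isOpen_setOf_forall_mem [Finite ι] {s : Set α} (hs : IsOpen s) :
    IsOpen {x : ι → α | ∀ i, x i ∈ s} := by
  rw [setOf_forall_mem_eq_univ_pi]
  exact isOpen_set_pi finite_univ fun _ _ => hs

theorem isPreconnected_setOf_forall_mem {s : Set α} (hs : IsPreconnected s) :
    IsPreconnected {x : ι → α | ∀ i, x i ∈ s} := by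
  rw [setOf_forall_mem_eq_univ_pi]
  exact isPreconnected_univ_pi fun _ => hs

end Box

theorem Fin.forall_snoc_apply_mem_iff {α : Type*} {n : ℕ} {s : Set α} {y : Fin n → α} {a : α} :
    (∀ i, (Fin.snoc y a : Fin (n + 1) → α) i ∈ s) ↔ (∀ i, y i ∈ s) ∧ a ∈ s := by
  simp [Fin.forall_fin_succ']

theorem mapsTo_of_forall_mapsTo_snoc {α β : Type*} {n : ℕ} {f : (Fin (n + 1) → α) → β}
    {s V : Set α} {A : Set β}
    (h : ∀ a ∈ V, MapsTo (fun y => f (Fin.snoc y a)) {y : Fin n → α | ∀ i, y i ∈ s} A) :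
    MapsTo f {x | (∀ i, x i ∈ s) ∧ x (Fin.last n) ∈ V} A := by
  rintro x ⟨hx, hxV⟩
  rw [← Fin.snoc_init_self x]
  exact h _ hxV fun i => hx _

theorem slice_not_in_rational_hyperplane_general (k n : ℕ)
    (f : (Fin (k + 1) → ℝ) → (Fin n → ℝ))
    (hana : AnalyticOnNhd ℝ f {x : Fin (k + 1) → ℝ | ∀ i, x i ∈ Set.Ioo (0 : ℝ) 1})
    (hnot : ∀ A : Set (Fin n → ℝ), IsRatAffineHyperplane n A →
      ¬ f '' {x : Fin (k + 1) → ℝ | ∀ i, x i ∈ Set.Ioo (0 : ℝ) 1} ⊆ A) :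
    ∃ α ∈ Set.Ioo (0 : ℝ) 1, ∀ A : Set (Fin n → ℝ), IsRatAffineHyperplane n A →
      ¬ (fun x : Fin k → ℝ => f (Fin.snoc x α)) ''
          {x : Fin k → ℝ | ∀ i, x i ∈ Set.Ioo (0 : ℝ) 1} ⊆ A := by
  by_contra! hslice
  obtain ⟨A, hA, V, hV, hVo, ⟨α₀, hα₀⟩, hVA⟩ := isOpen_Ioo.exists_isOpen_forall_mapsTo
    (nonempty_Ioo.2 zero_lt_one) (countable_setOf_isRatAffineHyperplane n)
    (fun _ => IsRatAffineHyperplane.isClosed) (F := fun (y : Fin k → ℝ) α => f (Fin.snoc y α))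
    (fun y hy => hana.continuousOn.comp
      (Continuous.finSnoc (A := fun _ => ℝ) continuous_const continuous_id).continuousOn
      fun α hα => Fin.forall_snoc_apply_mem_iff.2 ⟨hy, hα⟩)
    fun α hα => (hslice α hα).imp fun A hA => ⟨hA.1, image_subset_iff.1 hA.2⟩
  set W : Set (Fin (k + 1) → ℝ) := {x | (∀ i, x i ∈ Ioo 0 1) ∧ x (Fin.last k) ∈ V}
  have hW : IsOpen W :=
    (isOpen_setOf_forall_mem isOpen_Ioo).inter (hVo.preimage (continuous_apply _))
  have hα₀W : Fin.snoc (fun _ => 1 / 2) α₀ ∈ W :=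
    ⟨Fin.forall_snoc_apply_mem_iff.2 ⟨fun _ => by norm_num, hV hα₀⟩, by simpa using hα₀⟩
  exact hnot A hA <| image_subset_iff.2 <| hA.mapsTo_of_analyticOnNhd hana
    (isPreconnected_setOf_forall_mem isPreconnected_Ioo) hW (fun _ hx => hx.1) ⟨_, hα₀W⟩
    (mapsTo_of_forall_mapsTo_snoc hVA)

/-- Lemma 3.5: if the image of a real analytic immersion `f : (0,1)^k → ℝⁿ` (with
`k = k'+1 ≥ 3`) is not contained in any rational affine hyperplane, then there is
`α ∈ (0,1)` such that the image of the slice `f_α` is not contained in any rational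
affine hyperplane. -/
theorem slice_not_in_rational_hyperplane (k n : ℕ) (hk : 2 ≤ k)
    (f : (Fin (k + 1) → ℝ) → (Fin n → ℝ))
    (hana : AnalyticOnNhd ℝ f {x : Fin (k + 1) → ℝ | ∀ i, x i ∈ Set.Ioo (0 : ℝ) 1})
    (hinj : Set.InjOn f {x : Fin (k + 1) → ℝ | ∀ i, x i ∈ Set.Ioo (0 : ℝ) 1})
    (himm : ∀ x ∈ {x : Fin (k + 1) → ℝ | ∀ i, x i ∈ Set.Ioo (0 : ℝ) 1},
      Function.Injective (fderiv ℝ f x))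
    (hnot : ∀ A : Set (Fin n → ℝ), IsRatAffineHyperplane n A →
      ¬ f '' {x : Fin (k + 1) → ℝ | ∀ i, x i ∈ Set.Ioo (0 : ℝ) 1} ⊆ A) :
    ∃ α ∈ Set.Ioo (0 : ℝ) 1, ∀ A : Set (Fin n → ℝ), IsRatAffineHyperplane n A →
      ¬ (fun x : Fin k → ℝ => f (Fin.snoc x α)) ''
          {x : Fin k → ℝ | ∀ i, x i ∈ Set.Ioo (0 : ℝ) 1} ⊆ A :=
  slice_not_in_rational_hyperplane_general k n f hana hnot
end

section
/- Let M be a connected real analytic submanifold of ℝⁿ. If (0,1)^k = ⋃_m f^{-1}(A_m ∩ M) where f parametrizes M and the union is over countably many rational affine hyperplanes A_m, then M is contained in some rational affine hyperplane A_{m₀}. -/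
/-- If the cube `(0,1)^k` is covered by the preimages under a real analytic immersion
`f` of countably many rational affine hyperplanes, then the (connected) image
`M = f '' (0,1)^k` is contained in one of these hyperplanes. -/
theorem covered_by_rational_hyperplanes (k n : ℕ)
    (f : (Fin k → ℝ) → (Fin n → ℝ))
    (hana : AnalyticOnNhd ℝ f {x : Fin k → ℝ | ∀ i, x i ∈ Set.Ioo (0 : ℝ) 1})
    (hinj : Set.InjOn f {x : Fin k → ℝ | ∀ i, x i ∈ Set.Ioo (0 : ℝ) 1})
    (himm : ∀ x ∈ {x : Fin k → ℝ | ∀ i, x i ∈ Set.Ioo (0 : ℝ) 1},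
      Function.Injective (fderiv ℝ f x))
    (hconn : IsPreconnected (f '' {x : Fin k → ℝ | ∀ i, x i ∈ Set.Ioo (0 : ℝ) 1}))
    (A : ℕ → Set (Fin n → ℝ)) (hA : ∀ j, IsRatAffineHyperplane n (A j))
    (hcover : {x : Fin k → ℝ | ∀ i, x i ∈ Set.Ioo (0 : ℝ) 1} ⊆ ⋃ j, f ⁻¹' (A j)) :
    ∃ j : ℕ, f '' {x : Fin k → ℝ | ∀ i, x i ∈ Set.Ioo (0 : ℝ) 1} ⊆ A j := by
  set Q : Set (Fin k → ℝ) := {x : Fin k → ℝ | ∀ i, x i ∈ Set.Ioo (0 : ℝ) 1} with hQ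
  -- basic properties of the cube
  have hQeq : Q = Set.pi Set.univ (fun _ : Fin k => Set.Ioo (0 : ℝ) 1) := by
    ext x; simp [hQ, Set.mem_pi]
  have hQopen : IsOpen Q := by
    rw [hQeq]
    exact isOpen_set_pi Set.finite_univ (fun i _ => isOpen_Ioo)
  have hQconv : Convex ℝ Q := by
    rw [hQeq]; exact convex_pi (fun i _ => convex_Ioo 0 1)
  have hQconn : IsPreconnected Q := hQconv.isPreconnected
  have hQne : Q.Nonempty := ⟨fun _ => 1/2, fun i => by norm_num⟩
  -- the analytic functions g j
  choose m hm0 M hAM using hA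
  set g : ℕ → (Fin k → ℝ) → ℝ :=
    fun j x => (∑ i, (m j i : ℝ) * f x i) - (M j : ℝ) with hg
  have hganal : ∀ j, AnalyticOnNhd ℝ (g j) Q := by
    intro j x hx
    have : AnalyticAt ℝ (fun x => ∑ i, (m j i : ℝ) * f x i) x := by
      apply Finset.analyticAt_fun_sum
      intro i _
      exact ((analyticAt_const (v := (m j i : ℝ))).mul
        (((ContinuousLinearMap.proj i : (Fin n → ℝ) →L[ℝ] ℝ).analyticAt _).comp (hana x hx)))
    exact this.sub analyticAt_const
  have hgmem : ∀ j x, f x ∈ A j ↔ g j x = 0 := by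
    intro j x
    rw [hAM j]
    simp [hg, sub_eq_zero]
  -- Baire category
  set C : Option ℕ → Set (Fin k → ℝ) :=
    fun o => Option.elim o Qᶜ (fun j => closure (Q ∩ f ⁻¹' (A j))) with hC
  have hCclosed : ∀ o, IsClosed (C o) := by
    rintro (_ | j)
    · exact hQopen.isClosed_compl
    · exact isClosed_closure
  have hCunion : (⋃ o, C o) = Set.univ := by
    apply Set.eq_univ_of_forall
    intro x
    by_cases hx : x ∈ Q
    · obtain ⟨_, ⟨j, rfl⟩, hxj⟩ := hcover hx
      exact Set.mem_iUnion.2 ⟨some j, subset_closure ⟨hx, hxj⟩⟩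
    · exact Set.mem_iUnion.2 ⟨none, hx⟩
  have hdense := dense_iUnion_interior_of_closed hCclosed hCunion
  obtain ⟨x, hxI, hxQ⟩ := hdense.exists_mem_open hQopen hQne
  obtain ⟨o, hxo⟩ := Set.mem_iUnion.1 hxI
  obtain (_ | j) := o
  · exact absurd hxQ (interior_subset hxo)
  -- g j vanishes near x
  have hnear : ∀ y ∈ interior (C (some j)) ∩ Q, g j y = 0 := by
    rintro y ⟨hy1, hy2⟩
    have hyc : y ∈ closure (Q ∩ f ⁻¹' (A j)) := interior_subset hy1
    have hcont : ContinuousAt (g j) y := ((hganal j) y hy2).continuousAt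
    have hne : (nhdsWithin y (Q ∩ f ⁻¹' (A j))).NeBot :=
      mem_closure_iff_nhdsWithin_neBot.1 hyc
    have h1 : Filter.Tendsto (g j) (nhdsWithin y (Q ∩ f ⁻¹' (A j))) (nhds (g j y)) :=
      hcont.continuousWithinAt
    have h2 : Filter.Tendsto (g j) (nhdsWithin y (Q ∩ f ⁻¹' (A j))) (nhds 0) := by
      apply Filter.Tendsto.congr' ?_ tendsto_const_nhds
      filter_upwards [self_mem_nhdsWithin] with z hz
      exact ((hgmem j z).1 hz.2).symm
    exact tendsto_nhds_unique h1 h2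
  -- identity theorem
  have hev : g j =ᶠ[nhds x] 0 := by
    have hopen : IsOpen (interior (C (some j)) ∩ Q) := isOpen_interior.inter hQopen
    filter_upwards [hopen.mem_nhds ⟨hxo, hxQ⟩] with z hz
    exact hnear z hz
  have hzero : Set.EqOn (g j) 0 Q :=
    (hganal j).eqOn_zero_of_preconnected_of_eventuallyEq_zero hQconn hxQ hev
  refine ⟨j, ?_⟩
  rintro _ ⟨x', hx', rfl⟩
  exact (hgmem j x').2 (hzero hx')
end

section
/- Let A be a badly approximable s-dimensional affine subspace of ℝⁿ. Then for every ξ ∈ A, the uniform simultaneous exponent satisfies ω̂(ξ) ≤ (s+1)/(n-s). -/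
lemma distZ_le_abs_sub (x : ℝ) (z : ℤ) : distZ x ≤ |x - z| := round_le x z

set_option maxHeartbeats 1000000 in
/-- Proposition 5.1(i): for every `ξ` on a badly approximable `s`-dimensional affine
subspace `A = {(x, y₀ + Yx)}` of `ℝⁿ` (`n = s + m`), the uniform simultaneous exponent
satisfies `ω̂(ξ) ≤ (s+1)/(n-s)`. -/
theorem badly_approximable_uniform_exponent_le (s m : ℕ) (hm : 0 < m)
    (Y : Matrix (Fin m) (Fin s) ℝ) (y₀ : Fin m → ℝ)
    (hbad : ∃ ε : ℝ, 0 < ε ∧ ∀ q : Fin (s + 1) → ℤ, q ≠ 0 →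
      ∃ i : Fin m, ε ≤
        (((Finset.univ.sup fun j => (q j).natAbs) : ℕ) : ℝ) ^ (((s : ℝ) + 1) / m) *
          distZ ((Matrix.of fun i j => Fin.cases (y₀ i) (fun j' => Y i j') j).mulVec
            (fun j => (q j : ℝ)) i))
    (x : Fin s → ℝ) :
    ∀ γ : ℝ, 0 < γ →
      (∃ t₀ : ℝ, ∀ t : ℝ, t₀ ≤ t → ∃ q : ℤ, 0 < q ∧ (q : ℝ) ≤ t ∧
        ∀ j : Fin (s + m),
          distZ ((q : ℝ) * Fin.append x (y₀ + Y.mulVec x) j) ≤ t ^ (-γ)) →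
      γ ≤ ((s : ℝ) + 1) / m := by
  intro γ hγ hsol
  by_contra hlt
  push_neg at hlt
  obtain ⟨ε, hε, hbad⟩ := hbad
  obtain ⟨t₀, ht₀⟩ := hsol
  set α : ℝ := ((s : ℝ) + 1) / m with hα
  have hα0 : 0 ≤ α := by positivity
  set D : ℝ := 1 + ∑ j, |x j| with hD
  have hD1 : 1 ≤ D := le_add_of_nonneg_right (Finset.sum_nonneg fun _ _ => abs_nonneg _)
  set C : ℝ := 1 + ∑ i, ∑ j, |Y i j| with hC
  have hC1 : 1 ≤ C :=
    le_add_of_nonneg_right (Finset.sum_nonneg fun _ _ =>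
      Finset.sum_nonneg fun _ _ => abs_nonneg _)
  -- choose t large
  have htend : Filter.Tendsto (fun t : ℝ => D ^ α * C * t ^ (α - γ)) Filter.atTop (nhds 0) := by
    have h := (tendsto_rpow_neg_atTop (y := γ - α) (by linarith)).const_mul (D ^ α * C)
    simpa [neg_sub, mul_zero] using h
  obtain ⟨t, hfε, htg⟩ :=
    ((htend.eventually_lt_const hε).and (Filter.eventually_ge_atTop (max t₀ 1))).exists
  have ht₀' : t₀ ≤ t := le_trans (le_max_left _ _) htg
  have ht1 : (1 : ℝ) ≤ t := le_trans (le_max_right _ _) htg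
  have ht : (0 : ℝ) < t := lt_of_lt_of_le one_pos ht1
  obtain ⟨q, hq, hqt, happ⟩ := ht₀ t ht₀'
  have hq1 : (1 : ℝ) ≤ (q : ℝ) := by exact_mod_cast hq
  have htneg : (0 : ℝ) ≤ t ^ (-γ) := Real.rpow_nonneg ht.le _
  set v : Fin m → ℝ := y₀ + Y.mulVec x with hv
  set Q : Fin (s + 1) → ℤ := Fin.cons q (fun j => round ((q : ℝ) * x j)) with hQ
  have hQ0 : Q ≠ 0 := by
    intro h
    have := congrFun h 0
    simp [hQ] at this
    omega
  obtain ⟨i, hi⟩ := hbad Q hQ0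
  set p : Fin s → ℤ := fun j => round ((q : ℝ) * x j) with hp
  -- distance of q * x j to p j
  have hxj : ∀ j : Fin s, |(p j : ℝ) - (q : ℝ) * x j| ≤ t ^ (-γ) := by
    intro j
    have h := happ (Fin.castAdd m j)
    rw [Fin.append_left] at h
    rw [abs_sub_comm]
    exact h
  -- distance of q * v i
  have hvi : |(q : ℝ) * v i - (round ((q : ℝ) * v i) : ℤ)| ≤ t ^ (-γ) := by
    have h := happ (Fin.natAdd s i)
    rw [Fin.append_right] at h
    exact h
  set M : Matrix (Fin m) (Fin (s + 1)) ℝ :=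
    Matrix.of fun i j => Fin.cases (y₀ i) (fun j' => Y i j') j with hM
  set Qr : Fin (s + 1) → ℝ := fun j => ((Q j : ℤ) : ℝ) with hQr
  have hMQ : M.mulVec Qr i = y₀ i * (q : ℝ) + ∑ j', Y i j' * (p j' : ℝ) := by
    simp [hM, Matrix.mulVec, dotProduct, Fin.sum_univ_succ, hQr, hQ, hp]
  have hvi' : (q : ℝ) * v i = (q : ℝ) * y₀ i + ∑ j', Y i j' * ((q : ℝ) * x j') := by
    have h1 : v i = y₀ i + ∑ j', Y i j' * x j' := by
      simp [hv, Matrix.mulVec, dotProduct]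
    rw [h1, mul_add, Finset.mul_sum]
    congr 1
    exact Finset.sum_congr rfl fun j _ => by ring
  have key : M.mulVec Qr i - (q : ℝ) * v i
      = ∑ j', Y i j' * ((p j' : ℝ) - (q : ℝ) * x j') := by
    rw [hMQ, hvi']
    rw [show y₀ i * (q : ℝ) + (∑ j', Y i j' * (p j' : ℝ))
        - ((q : ℝ) * y₀ i + ∑ j', Y i j' * ((q : ℝ) * x j'))
        = (∑ j', Y i j' * (p j' : ℝ)) - ∑ j', Y i j' * ((q : ℝ) * x j') by ring]
    rw [← Finset.sum_sub_distrib]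
    exact Finset.sum_congr rfl fun j _ => by ring
  -- row sum bound
  have hrow : (∑ j', |Y i j'|) ≤ C - 1 := by
    rw [hC]
    have := Finset.single_le_sum
      (f := fun i => ∑ j', |Y i j'|)
      (fun i _ => Finset.sum_nonneg fun _ _ => abs_nonneg _) (Finset.mem_univ i)
    linarith
  have hdist : distZ (M.mulVec Qr i) ≤ C * t ^ (-γ) := by
    have h1 : distZ (M.mulVec Qr i) ≤ |M.mulVec Qr i - (round ((q : ℝ) * v i) : ℤ)| :=
      distZ_le_abs_sub _ _
    have h2 : M.mulVec Qr i - (round ((q : ℝ) * v i) : ℤ)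
        = ((q : ℝ) * v i - (round ((q : ℝ) * v i) : ℤ))
          + ∑ j', Y i j' * ((p j' : ℝ) - (q : ℝ) * x j') := by
      rw [← key]; ring
    have h3 : |∑ j', Y i j' * ((p j' : ℝ) - (q : ℝ) * x j')| ≤ (∑ j', |Y i j'|) * t ^ (-γ) := by
      calc |∑ j', Y i j' * ((p j' : ℝ) - (q : ℝ) * x j')|
          ≤ ∑ j', |Y i j' * ((p j' : ℝ) - (q : ℝ) * x j')| := Finset.abs_sum_le_sum_abs _ _
        _ ≤ ∑ j', |Y i j'| * t ^ (-γ) := by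
            refine Finset.sum_le_sum fun j _ => ?_
            rw [abs_mul]
            exact mul_le_mul_of_nonneg_left (hxj j) (abs_nonneg _)
        _ = (∑ j', |Y i j'|) * t ^ (-γ) := (Finset.sum_mul _ _ _).symm
    have h4 : (∑ j', |Y i j'|) * t ^ (-γ) ≤ (C - 1) * t ^ (-γ) :=
      mul_le_mul_of_nonneg_right hrow htneg
    calc distZ (M.mulVec Qr i)
        ≤ |M.mulVec Qr i - (round ((q : ℝ) * v i) : ℤ)| := h1
      _ ≤ |(q : ℝ) * v i - (round ((q : ℝ) * v i) : ℤ)|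
          + |∑ j', Y i j' * ((p j' : ℝ) - (q : ℝ) * x j')| := by rw [h2]; exact abs_add_le _ _
      _ ≤ t ^ (-γ) + (C - 1) * t ^ (-γ) := add_le_add hvi (le_trans h3 h4)
      _ = C * t ^ (-γ) := by ring
  -- sup bound
  set N : ℕ := Finset.univ.sup fun j => (Q j).natAbs with hN
  have hNle : (N : ℝ) ≤ D * t := by
    obtain ⟨j, -, hj⟩ := Finset.exists_mem_eq_sup Finset.univ Finset.univ_nonempty
      (fun j => (Q j).natAbs)
    rw [hN, hj]
    induction j using Fin.cases with
    | zero =>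
        have hq0 : Q 0 = q := by simp [hQ]
        rw [hq0, Nat.cast_natAbs, Int.cast_abs, abs_of_pos (by exact_mod_cast hq : (0:ℝ) < (q:ℝ))]
        nlinarith
    | succ j =>
        have hqs : Q j.succ = p j := by simp [hQ, hp]
        rw [hqs, Nat.cast_natAbs, Int.cast_abs]
        have h1 : |(p j : ℝ)| ≤ |(q : ℝ) * x j| + 1 / 2 := by
          have h2 : |(q : ℝ) * x j - (p j : ℝ)| ≤ 1 / 2 := abs_sub_round _
          calc |(p j : ℝ)| ≤ |(p j : ℝ) - (q : ℝ) * x j| + |(q : ℝ) * x j| := by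
                have := abs_add_le ((p j : ℝ) - (q : ℝ) * x j) ((q : ℝ) * x j)
                simpa using this
            _ ≤ 1 / 2 + |(q : ℝ) * x j| := by rw [abs_sub_comm] at h2; linarith
            _ = |(q : ℝ) * x j| + 1 / 2 := by ring
        have hxD : |x j| ≤ D - 1 := by
          rw [hD]
          have := Finset.single_le_sum (f := fun j => |x j|)
            (fun j _ => abs_nonneg (x j)) (Finset.mem_univ j)
          linarith
        have h3 : |(q : ℝ) * x j| = (q : ℝ) * |x j| := by
          rw [abs_mul, abs_of_pos (by exact_mod_cast hq : (0:ℝ) < (q:ℝ))]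
        have hxnn : (0:ℝ) ≤ |x j| := abs_nonneg _
        nlinarith
  -- final contradiction
  have h5 : ((N : ℕ) : ℝ) ^ α ≤ (D * t) ^ α :=
    Real.rpow_le_rpow (Nat.cast_nonneg N) hNle hα0
  have h6 : ε ≤ (D * t) ^ α * (C * t ^ (-γ)) :=
    le_trans hi (mul_le_mul h5 hdist (distZ_nonneg _) (Real.rpow_nonneg
      (by nlinarith : (0:ℝ) ≤ D * t) _))
  have h7 : (D * t) ^ α * (C * t ^ (-γ)) = D ^ α * C * t ^ (α - γ) := by
    rw [Real.mul_rpow (by linarith : (0:ℝ) ≤ D) ht.le]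
    rw [show α - γ = α + (-γ) by ring, Real.rpow_add ht]
    ring
  rw [h7] at h6
  linarith
end

section
/- For n ≥ 2 and ω̂ ∈ [1/n, 1), the unique root Gₙ ≥ 1 of g(x) = (1-ω̂)xⁿ - x^{n-1} + ω̂ satisfies Gₙ ≥ (1/(1-ω̂))·((n-1)/n). -/
/-!
Write `n = m + 1` and `x₀ = m / (n (1 - ω̂))`, so that `(1 - ω̂) x₀ = m / n` and
`g(x₀) = ω̂ - x₀ᵐ / n`. Bernoulli's inequality `x^(m+1) ≥ 1 + (m+1)(x-1)`, divided by `x₀`,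
gives `x₀ᵐ ≥ n - m / x₀ = n ω̂`, hence `g(x₀) ≤ 0`; this is the bound
`ω̂ (1 - ω̂)ᵐ ≤ (1/n)(1 - 1/n)ᵐ`. Since `g(1/(1 - ω̂)) = ω̂ ≥ 0`, the intermediate value theorem
gives a root `c ≥ x₀`, and either `c ≥ 1`, so `c = Gₙ` by uniqueness, or `x₀ ≤ c < 1 ≤ Gₙ`.
-/

def rootPoly (n : ℕ) (w x : ℝ) : ℝ := (1 - w) * x ^ n - x ^ (n - 1) + w

theorem add_one_sub_div_le_pow {x : ℝ} (hx : 0 < x) (m : ℕ) : (m + 1 : ℝ) - m / x ≤ x ^ m := by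
  have bernoulli := one_add_mul_sub_le_pow (by linarith : (-1 : ℝ) ≤ x) (m + 1)
  have hquot : (m + 1 : ℝ) - m / x = (1 + (m + 1 : ℕ) * (x - 1)) / x := by
    push_cast; field_simp; ring
  rw [hquot, div_le_iff₀ hx, ← pow_succ]
  exact bernoulli

theorem rootPoly_succ (m : ℕ) (w x : ℝ) : rootPoly (m + 1) w x = x ^ m * ((1 - w) * x - 1) + w := by
  simp only [rootPoly, Nat.add_sub_cancel, pow_succ]
  ring

theorem rootPoly_one_div_one_sub {n : ℕ} (hn : 1 ≤ n) {w : ℝ} (hw : w ≠ 1) :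
    rootPoly n w (1 / (1 - w)) = w := by
  obtain ⟨m, rfl⟩ := Nat.exists_eq_add_of_le' hn
  have : (1 - w) * (1 / (1 - w)) = 1 := mul_one_div_cancel (sub_ne_zero.mpr hw.symm)
  rw [rootPoly_succ, this, sub_self, mul_zero, zero_add]

theorem rootPoly_nonpos {n : ℕ} (hn : 2 ≤ n) {w : ℝ} (hw : w < 1) :
    rootPoly n w (1 / (1 - w) * ((n - 1) / n)) ≤ 0 := by
  obtain ⟨m, rfl⟩ := Nat.exists_eq_add_of_le' (by omega : 1 ≤ n)
  have hm : (0 : ℝ) < m := by exact_mod_cast (by omega : 0 < m)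
  have h1w : 0 < 1 - w := by linarith
  set x₀ := 1 / (1 - w) * ((((m + 1 : ℕ) : ℝ) - 1) / (m + 1 : ℕ)) with hx₀
  have hx₀' : x₀ = m / ((m + 1) * (1 - w)) := by
    rw [hx₀, Nat.cast_succ, add_sub_cancel_right]; field_simp
  have hx₀_pos : 0 < x₀ := by rw [hx₀']; positivity
  have hx₀_scaled : (1 - w) * x₀ - 1 = -1 / (m + 1) := by
    rw [hx₀']; field_simp; ring
  have hx₀_inv : (m : ℝ) / x₀ = (m + 1) * (1 - w) := by
    rw [hx₀']; field_simp
  have key : (m + 1) * w ≤ x₀ ^ m := by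
    have := add_one_sub_div_le_pow hx₀_pos m
    rw [hx₀_inv] at this
    linarith
  have hw_le : w ≤ x₀ ^ m / (m + 1) := by
    rw [le_div_iff₀ (by positivity)]
    linarith
  rw [rootPoly_succ, hx₀_scaled, mul_div_assoc', mul_neg_one, neg_div]
  linarith

theorem exists_rootPoly_eq_zero_ge {n : ℕ} (hn : 2 ≤ n) {w : ℝ} (hw₀ : 0 ≤ w) (hw₁ : w < 1) :
    ∃ c, 1 / (1 - w) * ((n - 1) / n) ≤ c ∧ rootPoly n w c = 0 := by
  have hle : 1 / (1 - w) * ((n - 1) / n) ≤ 1 / (1 - w) := by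
    refine mul_le_of_le_one_right (by rw [one_div_nonneg]; linarith) ?_
    rw [div_le_one (by positivity)]
    linarith
  have hcont : ContinuousOn (rootPoly n w) (Set.Icc (1 / (1 - w) * ((n - 1) / n)) (1 / (1 - w))) :=
    by unfold rootPoly; fun_prop
  have hright : w = rootPoly n w (1 / (1 - w)) := (rootPoly_one_div_one_sub (by omega) hw₁.ne).symm
  obtain ⟨c, hc, hroot⟩ := intermediate_value_Icc hle hcont
    ⟨rootPoly_nonpos hn hw₁, hright ▸ hw₀⟩
  exact ⟨c, hc.1, hroot⟩

theorem root_lower_bound_general (n : ℕ) (hn : 2 ≤ n) (w : ℝ)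
    (hw : w ∈ Set.Ico (1 / (n : ℝ)) 1) (G : ℝ)
    (hG1 : 1 ≤ G)
    (huniq : ∀ x : ℝ, 1 ≤ x → (1 - w) * x ^ n - x ^ (n - 1) + w = 0 → x = G) :
    (1 / (1 - w)) * (((n : ℝ) - 1) / n) ≤ G := by
  have hw₀ : 0 ≤ w := le_trans (by positivity) hw.1
  obtain ⟨c, hx₀c, hc⟩ := exists_rootPoly_eq_zero_ge hn hw₀ hw.2
  rcases le_or_gt 1 c with hc1 | hc1
  · exact huniq c hc1 hc ▸ hx₀c
  · linarith

/-- For `n ≥ 2` and `ω̂ ∈ [1/n, 1)`, the unique root `Gₙ ≥ 1` of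
`g(x) = (1-ω̂)xⁿ - x^{n-1} + ω̂` satisfies `Gₙ ≥ (1/(1-ω̂))·((n-1)/n)`. -/
theorem root_lower_bound (n : ℕ) (hn : 2 ≤ n) (w : ℝ)
    (hw : w ∈ Set.Ico (1 / (n : ℝ)) 1) (G : ℝ)
    (hG1 : 1 ≤ G) (hroot : (1 - w) * G ^ n - G ^ (n - 1) + w = 0)
    (huniq : ∀ x : ℝ, 1 ≤ x → (1 - w) * x ^ n - x ^ (n - 1) + w = 0 → x = G) :
    (1 / (1 - w)) * (((n : ℝ) - 1) / n) ≤ G :=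
  root_lower_bound_general n hn w hw G hG1 huniq
end
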